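/- arXiv:2206.05691 — 3 statements merged into one kernel-verified Lean document; each statement's English description precedes it below -/
import Mathlib

section
/- Let h : X → ℝ be measurable with π(h) = 0 and h ∈ L^m(π) for some m ≥ 1, and let 1 ≤ p < m. Then for every integer t ≥ 0, ‖P^t h‖_{L^p(π)} ≤ 2 · ℙ_{π⊗π}(τ > t)^{(m−p)/(mp)} · ‖h‖_{L^m(π)}, where ℙ_{π⊗π}(τ > t) = ∫ ℙ_{x,y}(τ > t) (π⊗π)(dx,dy). -/
open MeasureTheory ProbabilityTheory ENNReal Filter Topology

section Setup

variable {S : Type*} [MeasurableSpace S]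

/-- The `t`-fold composition of a Markov kernel. -/
noncomputable def kpow (P : ProbabilityTheory.Kernel S S) : ℕ → ProbabilityTheory.Kernel S S
  | 0 => ProbabilityTheory.Kernel.id
  | n + 1 => (kpow P n).comp P

/-- `IsTrajMeasure P ν μ` : `μ` is the law on `ℕ → S` of the time-homogeneous Markov chain
with transition kernel `P` and initial distribution `ν`. -/
def IsTrajMeasure (P : ProbabilityTheory.Kernel S S) (ν : MeasureTheory.Measure S)
    (μ : MeasureTheory.Measure (ℕ → S)) : Prop :=
  MeasureTheory.IsProbabilityMeasure μ ∧
    μ.map (fun ω => ω 0) = ν ∧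
    ∀ n : ℕ,
      μ.map (fun ω => ((fun i : Fin (n + 1) => ω (i : ℕ)), ω (n + 1))) =
        (μ.map (fun ω => fun i : Fin (n + 1) => ω (i : ℕ))).compProd
          (P.comap (fun v : Fin (n + 1) → S => v (Fin.last n)) (measurable_pi_apply _))

/-- `Q` is a faithful coupling of the kernel `P` with itself. -/
def IsFaithfulCoupling (P : ProbabilityTheory.Kernel S S)
    (Q : ProbabilityTheory.Kernel (S × S) (S × S)) : Prop :=
  (∀ p : S × S, (Q p).map Prod.fst = P p.1) ∧
    (∀ p : S × S, (Q p).map Prod.snd = P p.2) ∧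
    ∀ x : S, Q (x, x) {q : S × S | q.1 = q.2} = 1

/-- The meeting time `τ = inf {t : X_t = Y_t}` of a coupled trajectory, with value `∞`
if the chains never meet. -/
noncomputable def meetTime (ω : ℕ → S × S) : ℝ≥0∞ :=
  ⨅ (n : ℕ) (_ : (ω n).1 = (ω n).2), (n : ℝ≥0∞)

/-- `G = ∑_{t=0}^{τ-1} (h(X_t) - h(Y_t))` along a coupled trajectory. -/
noncomputable def Gsum (h : S → ℝ) (ω : ℕ → S × S) : ℝ :=
  ∑' t : ℕ, if (t : ℝ≥0∞) < meetTime ω then h (ω t).1 - h (ω t).2 else 0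

/-- Total variation distance between two measures. -/
noncomputable def tvDist (μ ν : MeasureTheory.Measure S) : ℝ :=
  ⨆ A : {A : Set S // MeasurableSet A}, |(μ A.1).toReal - (ν A.1).toReal|

/-- `ζ(s) = ∑_{n ≥ 1} n^{-s}`, as a value in `ℝ≥0∞`. -/
noncomputable def zetaE (s : ℝ) : ℝ≥0∞ := ∑' n : ℕ, ((n : ℝ≥0∞) + 1) ^ (-s)

/-- `π`-irreducibility of a kernel. -/
def PiIrreducible (P : ProbabilityTheory.Kernel S S) (π : MeasureTheory.Measure S) : Prop :=
  ∀ x : S, ∀ A : Set S, MeasurableSet A → 0 < π A → ∃ n : ℕ, 1 ≤ n ∧ 0 < (kpow P n) x A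

/-- `g⋆(x) = ∑_{t=0}^∞ P^t h (x)`. -/
noncomputable def gstar (P : ProbabilityTheory.Kernel S S) (h : S → ℝ) (x : S) : ℝ :=
  ∑' t : ℕ, ∫ z, h z ∂((kpow P t) x)

end Setup

/-!
Under the coupling started at `(x, y)`, `P^t h x - P^t h y` is the mean of `h X_t - h Y_t`, and
since `π (P^t h) = 0` this bounds `‖P^t h‖_p` by the `L^p` norm of `h X_t - h Y_t` for the coupled
chain started from `π ⊗ π`. That difference vanishes off `{h X_t ≠ h Y_t}`, which lies in
`{τ > t}` up to a null set because a faithful coupling never leaves the diagonal. Hölder's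
inequality on this event trades the `L^p` norm for the `L^m` norm, at most `2 ‖h‖_m` because both
marginals of the coupled chain at time `t` are `π`, times `ℙ(τ > t) ^ (1/p - 1/m)`.
-/

namespace MeasureTheory

variable {α : Type*} [MeasurableSpace α] {E : Type*} [NormedAddCommGroup E]

lemma eLpNorm_ofReal_eq_lintegral {μ : Measure α} (f : α → E) {p : ℝ} (hp : 0 < p) :
    eLpNorm f (ENNReal.ofReal p) μ = (∫⁻ x, ‖f x‖ₑ ^ p ∂μ) ^ (1 / p) := by
  rw [eLpNorm_eq_lintegral_rpow_enorm_toReal (by simpa using hp) ofReal_ne_top,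
    toReal_ofReal hp.le]

lemma rpow_lintegral_le_lintegral_rpow {ν : Measure α} [IsProbabilityMeasure ν] {f : α → ℝ≥0∞}
    (hf : AEMeasurable f ν) {p : ℝ} (hp : 1 ≤ p) :
    (∫⁻ a, f a ∂ν) ^ p ≤ ∫⁻ a, f a ^ p ∂ν := by
  have h := eLpNorm'_le_eLpNorm'_of_exponent_le one_pos hp ν hf.aestronglyMeasurable
  simp only [eLpNorm'_eq_lintegral_enorm, enorm_eq_self, rpow_one, div_one] at h
  calc (∫⁻ a, f a ∂ν) ^ p ≤ ((∫⁻ a, f a ^ p ∂ν) ^ (1 / p)) ^ p := rpow_le_rpow h (by linarith)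
    _ = ∫⁻ a, f a ^ p ∂ν := by rw [← rpow_mul, one_div_mul_cancel (by linarith), rpow_one]

/-- No integrability is needed: if the right side is finite, `f` is integrable for both marginals
or for neither, and in the latter case both integrals vanish. -/
lemma enorm_integral_sub_le_lintegral_of_coupling [NormedSpace ℝ E] {γ : Measure (α × α)}
    {f : α → E} (hf₁ : AEStronglyMeasurable f (γ.map Prod.fst))
    (hf₂ : AEStronglyMeasurable f (γ.map Prod.snd)) :
    ‖∫ x, f x ∂(γ.map Prod.fst) - ∫ x, f x ∂(γ.map Prod.snd)‖ₑ ≤ ∫⁻ z, ‖f z.1 - f z.2‖ₑ ∂γ := by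
  rw [integral_map measurable_fst.aemeasurable hf₁, integral_map measurable_snd.aemeasurable hf₂]
  have hm₁ : AEStronglyMeasurable (fun z : α × α => f z.1) γ :=
    hf₁.comp_aemeasurable measurable_fst.aemeasurable
  have hm₂ : AEStronglyMeasurable (fun z : α × α => f z.2) γ :=
    hf₂.comp_aemeasurable measurable_snd.aemeasurable
  by_cases hd : Integrable (fun z : α × α => f z.1 - f z.2) γ
  swap
  · have : ¬ HasFiniteIntegral (fun z : α × α => f z.1 - f z.2) γ := fun h => hd ⟨hm₁.sub hm₂, h⟩
    rw [hasFiniteIntegral_iff_enorm, not_lt, top_le_iff] at this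
    simp [this]
  by_cases h₁ : Integrable (fun z : α × α => f z.1) γ
  · have h₂ : Integrable (fun z : α × α => f z.2) γ :=
      (h₁.sub hd).congr (ae_of_all _ fun _ => sub_sub_cancel _ _)
    rw [← integral_sub h₁ h₂]
    exact enorm_integral_le_lintegral_enorm _
  · have h₂ : ¬ Integrable (fun z : α × α => f z.2) γ := fun h₂ =>
      h₁ ((hd.add h₂).congr (ae_of_all _ fun _ => sub_add_cancel _ _))
    simp [integral_undef h₁, integral_undef h₂]

lemma lintegral_enorm_rpow_le_lintegral_enorm_sub_rpow [NormedSpace ℝ E] [CompleteSpace E]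
    {μ : Measure α} [IsProbabilityMeasure μ] {T : α → E} (hT : Integrable T μ)
    (hT₀ : ∫ x, T x ∂μ = 0) {p : ℝ} (hp : 1 ≤ p) :
    ∫⁻ x, ‖T x‖ₑ ^ p ∂μ ≤ ∫⁻ z, ‖T z.1 - T z.2‖ₑ ^ p ∂(μ.prod μ) := by
  rw [lintegral_prod (fun z => ‖T z.1 - T z.2‖ₑ ^ p)
    ((hT.1.comp_fst.sub hT.1.comp_snd).enorm.pow_const p)]
  refine lintegral_mono fun x => ?_
  have hx : T x = ∫ y, (T x - T y) ∂μ := by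
    rw [integral_sub (integrable_const _) hT, hT₀, integral_const, sub_zero, probReal_univ,
      one_smul]
  calc ‖T x‖ₑ ^ p ≤ (∫⁻ y, ‖T x - T y‖ₑ ∂μ) ^ p :=
        rpow_le_rpow ((congrArg (‖·‖ₑ) hx).trans_le (enorm_integral_le_lintegral_enorm _))
          (by linarith)
    _ ≤ ∫⁻ y, ‖T x - T y‖ₑ ^ p ∂μ :=
        rpow_lintegral_le_lintegral_rpow
          (aestronglyMeasurable_const.sub hT.1).enorm hp

lemma eLpNorm_comp_fst_sub_comp_snd_le {π : Measure α} {γ : Measure (α × α)}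
    (h₁ : γ.map Prod.fst = π) (h₂ : γ.map Prod.snd = π) {f : α → E}
    (hf : AEStronglyMeasurable f π) {p q : ℝ≥0∞} (hpq : p ≤ q) (hq : 1 ≤ q) :
    eLpNorm (fun z => f z.1 - f z.2) p γ ≤
      2 * γ {z | f z.1 ≠ f z.2} ^ (1 / p.toReal - 1 / q.toReal) * eLpNorm f q π := by
  have hf₁ : AEStronglyMeasurable (fun z : α × α => f z.1) γ :=
    (h₁ ▸ hf).comp_aemeasurable measurable_fst.aemeasurable
  have hf₂ : AEStronglyMeasurable (fun z : α × α => f z.2) γ :=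
    (h₂ ▸ hf).comp_aemeasurable measurable_snd.aemeasurable
  have hsupp : (fun z : α × α => f z.1 - f z.2).support ⊆ {z | f z.1 ≠ f z.2} :=
    fun z hz => sub_ne_zero.mp hz
  have hmarg : ∀ g : α × α → α, Measurable g → γ.map g = π →
      eLpNorm (fun z => f (g z)) q γ = eLpNorm f q π := fun g hg hγ => by
    rw [← hγ, eLpNorm_map_measure (hγ ▸ hf) hg.aemeasurable]
    rfl
  calc eLpNorm (fun z => f z.1 - f z.2) p γ
      = eLpNorm (fun z => f z.1 - f z.2) p (γ.restrict {z | f z.1 ≠ f z.2}) :=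
        (eLpNorm_restrict_eq_of_support_subset hsupp).symm
    _ ≤ eLpNorm (fun z => f z.1 - f z.2) q γ *
          γ {z | f z.1 ≠ f z.2} ^ (1 / p.toReal - 1 / q.toReal) := by
        refine (eLpNorm_le_eLpNorm_mul_rpow_measure_univ hpq (hf₁.sub hf₂).restrict).trans ?_
        rw [Measure.restrict_apply_univ]
        gcongr
        exact eLpNorm_mono_measure _ Measure.restrict_le_self
    _ ≤ (eLpNorm (fun z => f z.1) q γ + eLpNorm (fun z => f z.2) q γ) *
          γ {z | f z.1 ≠ f z.2} ^ (1 / p.toReal - 1 / q.toReal) := by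
        gcongr
        exact eLpNorm_sub_le hf₁ hf₂ hq
    _ = 2 * γ {z | f z.1 ≠ f z.2} ^ (1 / p.toReal - 1 / q.toReal) * eLpNorm f q π := by
        rw [hmarg _ measurable_fst h₁, hmarg _ measurable_snd h₂, ← two_mul, mul_right_comm]

lemma Measure.map_comp_of_map_apply {β γ δ : Type*} [MeasurableSpace β] [MeasurableSpace γ]
    [MeasurableSpace δ] {C : Kernel β γ} {K : Kernel α δ} {g : β → α} {f : γ → δ}
    (hg : Measurable g) (hf : Measurable f) (hC : ∀ b, (C b).map f = K (g b)) (ρ : Measure β) :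
    (C ∘ₘ ρ).map f = K ∘ₘ ρ.map g := by
  ext s hs
  rw [Measure.map_apply hf hs, Measure.bind_apply (hf hs) C.aemeasurable,
    Measure.bind_apply hs K.aemeasurable, lintegral_map (K.measurable_coe hs) hg]
  refine lintegral_congr fun b => ?_
  rw [← hC b, Measure.map_apply hf hs]

end MeasureTheory

namespace ProbabilityTheory.Kernel

variable {α β : Type*} [MeasurableSpace α] [MeasurableSpace β]
  {E : Type*} [NormedAddCommGroup E] [NormedSpace ℝ E]

lemma Invariant.integrable_integral {K : Kernel α α} {π : Measure α} (hK : K.Invariant π)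
    {f : α → E} (hf : Integrable f π) : Integrable (fun x => ∫ y, f y ∂K x) π := by
  rw [← hK.def, Measure.comp_eq_comp_const_apply] at hf
  exact hf.integral_comp

lemma Invariant.integral_integral {K : Kernel α α} {π : Measure α} (hK : K.Invariant π)
    {f : α → E} (hf : Integrable f π) : ∫ x, ∫ y, f y ∂K x ∂π = ∫ x, f x ∂π := by
  rw [← hK.def, Measure.comp_eq_comp_const_apply] at hf
  calc ∫ x, ∫ y, f y ∂K x ∂π = ∫ x, f x ∂((K ∘ₖ Kernel.const Unit π) ()) :=
        (integral_comp hf).symm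
    _ = ∫ x, f x ∂π := by rw [← Measure.comp_eq_comp_const_apply, hK.def]

lemma lintegral_enorm_integral_sub_rpow_le {K : Kernel α β} {C : Kernel (α × α) (β × β)}
    [IsMarkovKernel C] (hC₁ : ∀ z, (C z).map Prod.fst = K z.1)
    (hC₂ : ∀ z, (C z).map Prod.snd = K z.2) (ρ : Measure (α × α)) {f : β → E}
    (hf : StronglyMeasurable f) {p : ℝ} (hp : 1 ≤ p) :
    ∫⁻ z, ‖∫ y, f y ∂K z.1 - ∫ y, f y ∂K z.2‖ₑ ^ p ∂ρ ≤
      ∫⁻ w, ‖f w.1 - f w.2‖ₑ ^ p ∂(C ∘ₘ ρ) := by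
  have hΔ : Measurable fun w : β × β => ‖f w.1 - f w.2‖ₑ :=
    ((hf.comp_measurable measurable_fst).sub (hf.comp_measurable measurable_snd)).enorm
  rw [Measure.lintegral_bind C.aemeasurable (hΔ.pow_const p).aemeasurable]
  refine lintegral_mono fun z => ?_
  have hcoupling := enorm_integral_sub_le_lintegral_of_coupling (γ := C z)
    (hf.aestronglyMeasurable (μ := (C z).map Prod.fst))
    (hf.aestronglyMeasurable (μ := (C z).map Prod.snd))
  rw [hC₁, hC₂] at hcoupling
  exact (rpow_le_rpow hcoupling (by linarith)).trans
    (rpow_lintegral_le_lintegral_rpow hΔ.aemeasurable hp)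

instance isMarkovKernel_kpow (P : Kernel α α) [IsMarkovKernel P] (n : ℕ) :
    IsMarkovKernel (kpow P n) := by
  induction n with
  | zero => rw [kpow]; infer_instance
  | succ n ih => rw [kpow]; infer_instance

lemma kpow_succ' (P : Kernel α α) [IsSFiniteKernel P] (n : ℕ) :
    kpow P (n + 1) = P ∘ₖ kpow P n := by
  induction n with
  | zero => simp [kpow]
  | succ n ih => rw [kpow, ih, Kernel.comp_assoc, ← ih]; rfl

lemma Invariant.kpow {P : Kernel α α} {π : Measure α} (hP : P.Invariant π) (n : ℕ) :
    (kpow P n).Invariant π := by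
  induction n with
  | zero => exact Measure.id_comp
  | succ n ih => exact ih.comp hP

lemma kpow_map_apply {P : Kernel α α} {Q : Kernel β β} {f : β → α} (hf : Measurable f)
    (hQ : ∀ q, (Q q).map f = P (f q)) (n : ℕ) (q : β) :
    (kpow Q n q).map f = kpow P n (f q) := by
  induction n generalizing q with
  | zero => simp only [kpow, id_apply, Measure.map_dirac' hf]
  | succ n ih => rw [kpow, kpow, comp_apply, comp_apply, Measure.map_comp_of_map_apply hf hf ih, hQ]

lemma map_comp_kpow_of_invariant {P : Kernel α α} {Q : Kernel β β} {f : β → α}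
    (hf : Measurable f) (hQ : ∀ q, (Q q).map f = P (f q)) {π : Measure α} (hP : P.Invariant π)
    {ρ : Measure β} (hρ : ρ.map f = π) (n : ℕ) : (kpow Q n ∘ₘ ρ).map f = π := by
  rw [Measure.map_comp_of_map_apply hf hf (kpow_map_apply hf hQ n), hρ, (hP.kpow n).def]

/-- The states from which the chain is almost surely in `B` after `j` steps. The one-step
recursion keeps these sets measurable and needs only the one-step Markov property; they stand in
for the diagonal of `S × S`, which need not be measurable. -/
def aeMemAfter (P : Kernel α α) (B : Set α) : ℕ → Set α
  | 0 => B
  | j + 1 => {x | P x (aeMemAfter P B j)ᶜ = 0}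

lemma measurableSet_aeMemAfter (P : Kernel α α) {B : Set α} (hB : MeasurableSet B) :
    ∀ j, MeasurableSet (P.aeMemAfter B j)
  | 0 => hB
  | j + 1 => P.measurable_coe (measurableSet_aeMemAfter P hB j).compl (measurableSet_singleton 0)

lemma subset_aeMemAfter (P : Kernel α α) [IsMarkovKernel P] {B C : Set α}
    (hB : MeasurableSet B) (hCB : C ⊆ B) (hC : ∀ x ∈ C, P x C = 1) :
    ∀ j, C ⊆ P.aeMemAfter B j
  | 0 => hCB
  | j + 1 => fun x hx => by
    refine (prob_compl_eq_zero_iff (P.measurableSet_aeMemAfter hB j)).mpr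
      (le_antisymm prob_le_one ?_)
    exact (hC x hx).symm.le.trans (measure_mono (subset_aeMemAfter P hB hCB hC j))

end ProbabilityTheory.Kernel

namespace IsTrajMeasure

variable {S : Type*} [MeasurableSpace S] {P : Kernel S S} [IsSFiniteKernel P] {ν : Measure S}
  {μ : Measure (ℕ → S)}

lemma measure_eval_mem_eval_succ_mem (hμ : IsTrajMeasure P ν μ) (n : ℕ) {A B : Set S}
    (hA : MeasurableSet A) (hB : MeasurableSet B) :
    μ {ω | ω n ∈ A ∧ ω (n + 1) ∈ B} = ∫⁻ x in A, P x B ∂(μ.map fun ω => ω n) := by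
  have : IsProbabilityMeasure μ := hμ.1
  have hprefix : Measurable fun (ω : ℕ → S) (i : Fin (n + 1)) => ω i := by fun_prop
  have hlast : Measurable fun v : Fin (n + 1) → S => v (Fin.last n) := measurable_pi_apply _
  have hA' : MeasurableSet ((fun v : Fin (n + 1) → S => v (Fin.last n)) ⁻¹' A) := hlast hA
  have hset : {ω : ℕ → S | ω n ∈ A ∧ ω (n + 1) ∈ B} =
      (fun ω => ((fun i : Fin (n + 1) => ω i), ω (n + 1))) ⁻¹'
        (((fun v : Fin (n + 1) → S => v (Fin.last n)) ⁻¹' A) ×ˢ B) := by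
    ext ω; simp [Fin.val_last]
  rw [hset, ← Measure.map_apply (hprefix.prodMk (measurable_pi_apply _)) (hA'.prod hB), hμ.2.2 n,
    Measure.compProd_apply_prod hA' hB]
  simp only [Kernel.comap_apply]
  rw [← setLIntegral_map hA (P.measurable_coe hB) hlast, Measure.map_map hlast hprefix]
  rfl

lemma map_eval_succ (hμ : IsTrajMeasure P ν μ) (n : ℕ) :
    μ.map (fun ω => ω (n + 1)) = P ∘ₘ μ.map (fun ω => ω n) := by
  ext B hB
  rw [Measure.map_apply (measurable_pi_apply _) hB, Measure.bind_apply hB P.aemeasurable,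
    ← setLIntegral_univ, ← hμ.measure_eval_mem_eval_succ_mem n MeasurableSet.univ hB]
  simp only [Set.mem_univ, true_and]
  rfl

lemma map_eval (hμ : IsTrajMeasure P ν μ) (n : ℕ) :
    μ.map (fun ω => ω n) = kpow P n ∘ₘ ν := by
  induction n with
  | zero => rw [hμ.2.1, kpow, Measure.id_comp]
  | succ n ih => rw [hμ.map_eval_succ, ih, Measure.comp_assoc, ← Kernel.kpow_succ']

lemma measure_eval_mem_eval_succ_notMem (hμ : IsTrajMeasure P ν μ) (n : ℕ) {A B : Set S}
    (hA : MeasurableSet A) (hB : MeasurableSet B) (hAB : ∀ x ∈ A, P x Bᶜ = 0) :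
    μ {ω | ω n ∈ A ∧ ω (n + 1) ∉ B} = 0 := by
  simpa only [Set.mem_compl_iff] using
    (hμ.measure_eval_mem_eval_succ_mem n hA hB.compl).trans (setLIntegral_eq_zero hA hAB)

lemma measure_aeMemAfter_notMem (hμ : IsTrajMeasure P ν μ) {B : Set S} (hB : MeasurableSet B)
    (j s : ℕ) : μ {ω | ω s ∈ P.aeMemAfter B j ∧ ω (s + j) ∉ B} = 0 := by
  induction j generalizing s with
  | zero => simp [Kernel.aeMemAfter]
  | succ j ih =>
    refine measure_mono_null (t := {ω | ω s ∈ P.aeMemAfter B (j + 1) ∧ ω (s + 1) ∉ P.aeMemAfter B j}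
      ∪ {ω | ω (s + 1) ∈ P.aeMemAfter B j ∧ ω (s + 1 + j) ∉ B}) ?_
      (measure_union_null (hμ.measure_eval_mem_eval_succ_notMem s
        (P.measurableSet_aeMemAfter hB _) (P.measurableSet_aeMemAfter hB j) fun _ hx => hx)
        (ih (s + 1)))
    rintro ω ⟨hs, hj⟩
    by_cases hmem : ω (s + 1) ∈ P.aeMemAfter B j
    · exact Or.inr ⟨hmem, by rwa [add_right_comm, add_assoc]⟩
    · exact Or.inl ⟨hs, hmem⟩

end IsTrajMeasure

lemma exists_fst_eq_snd_of_not_lt_meetTime {S : Type*} {ω : ℕ → S × S} {t : ℕ}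
    (ht : ¬ (t : ℝ≥0∞) < meetTime ω) : ∃ s ≤ t, (ω s).1 = (ω s).2 := by
  by_contra! hne
  refine ht ((Nat.cast_lt.mpr t.lt_succ_self).trans_le (le_iInf₂ fun n hn => ?_))
  exact Nat.cast_le.mpr (Nat.succ_le_of_lt (lt_of_not_ge fun hle => hne n hle hn))

lemma IsTrajMeasure.measure_notMem_le_measure_lt_meetTime {S : Type*} [MeasurableSpace S]
    {Q : Kernel (S × S) (S × S)} [IsMarkovKernel Q]
    (hQ : ∀ x : S, Q (x, x) {q : S × S | q.1 = q.2} = 1)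
    {ν : Measure (S × S)} {μ : Measure (ℕ → S × S)} (hμ : IsTrajMeasure Q ν μ)
    {B : Set (S × S)} (hB : MeasurableSet B) (hdiag : {q : S × S | q.1 = q.2} ⊆ B) (t : ℕ) :
    μ {ω | ω t ∉ B} ≤ μ {ω | (t : ℝ≥0∞) < meetTime ω} := by
  have hclosed : ∀ q ∈ {q : S × S | q.1 = q.2}, Q q {q : S × S | q.1 = q.2} = 1 := by
    rintro ⟨x, y⟩ (rfl : x = y)
    exact hQ x
  have hnull : μ (⋃ s, {ω | ω s ∈ Q.aeMemAfter B (t - s) ∧ ω (s + (t - s)) ∉ B}) = 0 :=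
    measure_iUnion_null fun s => hμ.measure_aeMemAfter_notMem hB (t - s) s
  refine measure_mono_ae (ae_le_set.mpr (measure_mono_null ?_ hnull))
  rintro ω ⟨hω, ht⟩
  obtain ⟨s, hst, hs⟩ := exists_fst_eq_snd_of_not_lt_meetTime ht
  refine Set.mem_iUnion.mpr ⟨s, Q.subset_aeMemAfter hB hdiag hclosed _ hs, ?_⟩
  rwa [Nat.add_sub_cancel' hst]

lemma measure_comp_kpow_compl_le_lintegral_lt_meetTime {S : Type*} [MeasurableSpace S]
    {Q : Kernel (S × S) (S × S)} [IsMarkovKernel Q]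
    (hQ : ∀ x : S, Q (x, x) {q : S × S | q.1 = q.2} = 1) {η : Kernel (S × S) (ℕ → S × S)}
    (hη : ∀ q, IsTrajMeasure Q (Measure.dirac q) (η q)) (ρ : Measure (S × S))
    {B : Set (S × S)} (hB : MeasurableSet B) (hdiag : {q : S × S | q.1 = q.2} ⊆ B) (t : ℕ) :
    (kpow Q t ∘ₘ ρ) Bᶜ ≤ ∫⁻ q, η q {ω | (t : ℝ≥0∞) < meetTime ω} ∂ρ := by
  rw [Measure.bind_apply hB.compl (kpow Q t).aemeasurable]
  refine lintegral_mono fun q => ?_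
  rw [← Measure.dirac_bind (kpow Q t).measurable q, ← (hη q).map_eval t,
    Measure.map_apply (measurable_pi_apply t) hB.compl]
  exact (hη q).measure_notMem_le_measure_lt_meetTime hQ hB hdiag t

theorem Lp_bound_kernel_iterate_general {S : Type*} [MeasurableSpace S]
    (P : ProbabilityTheory.Kernel S S)
    (π : MeasureTheory.Measure S) [IsProbabilityMeasure π]
    (hinv : π.bind (fun x => P x) = π)
    (Q : ProbabilityTheory.Kernel (S × S) (S × S)) [IsMarkovKernel Q]
    (hQ : IsFaithfulCoupling P Q)
    (η : ProbabilityTheory.Kernel (S × S) (ℕ → S × S))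
    (hη : ∀ p : S × S, IsTrajMeasure Q (MeasureTheory.Measure.dirac p) (η p))
    (h : S → ℝ) (hmeas : Measurable h) (hmean : ∫ x, h x ∂π = 0)
    (m : ℝ) (hm : 1 ≤ m) (hLm : ∫⁻ x, (‖h x‖₊ : ℝ≥0∞) ^ m ∂π < ⊤)
    (p : ℝ) (hp : 1 ≤ p) (hpm : p < m) :
    ∀ t : ℕ,
      (∫⁻ x, (‖∫ z, h z ∂((kpow P t) x)‖₊ : ℝ≥0∞) ^ p ∂π) ^ (1 / p) ≤
        2 * (∫⁻ q, η q {ω | (t : ℝ≥0∞) < meetTime ω} ∂(π.prod π)) ^ ((m - p) / (m * p)) *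
          (∫⁻ x, (‖h x‖₊ : ℝ≥0∞) ^ m ∂π) ^ (1 / m) := by
  intro t
  obtain ⟨hQ₁, hQ₂, hQd⟩ := hQ
  have hinvt : (kpow P t).Invariant π := Kernel.Invariant.kpow hinv t
  have hp₀ : 0 < p := by linarith
  have hm₀ : 0 < m := by linarith
  have hexp : 1 / (ENNReal.ofReal p).toReal - 1 / (ENNReal.ofReal m).toReal =
      (m - p) / (m * p) := by
    rw [toReal_ofReal hp₀.le, toReal_ofReal hm₀.le]
    field_simp
  have hhm : eLpNorm h (ENNReal.ofReal m) π = (∫⁻ x, (‖h x‖₊ : ℝ≥0∞) ^ m ∂π) ^ (1 / m) :=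
    eLpNorm_ofReal_eq_lintegral h hm₀
  have hint : Integrable h π := MemLp.integrable (by simpa using hm)
    ⟨hmeas.aestronglyMeasurable, hhm ▸ rpow_lt_top_of_nonneg (by positivity) hLm.ne⟩
  set γ := kpow Q t ∘ₘ π.prod π
  have hcentered : ∫⁻ x, ‖∫ z, h z ∂(kpow P t x)‖ₑ ^ p ∂π ≤
      ∫⁻ w, ‖h w.1 - h w.2‖ₑ ^ p ∂γ :=
    (lintegral_enorm_rpow_le_lintegral_enorm_sub_rpow (hinvt.integrable_integral hint)
      (by rw [hinvt.integral_integral hint, hmean]) hp).trans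
    (Kernel.lintegral_enorm_integral_sub_rpow_le (Kernel.kpow_map_apply measurable_fst hQ₁ t)
      (Kernel.kpow_map_apply measurable_snd hQ₂ t) _ hmeas.stronglyMeasurable hp)
  calc (∫⁻ x, (‖∫ z, h z ∂((kpow P t) x)‖₊ : ℝ≥0∞) ^ p ∂π) ^ (1 / p)
      ≤ eLpNorm (fun w : S × S => h w.1 - h w.2) (ENNReal.ofReal p) γ := by
        rw [eLpNorm_ofReal_eq_lintegral _ hp₀]
        exact rpow_le_rpow hcentered (by positivity)
    _ ≤ 2 * γ {w | h w.1 ≠ h w.2} ^ ((m - p) / (m * p)) * eLpNorm h (ENNReal.ofReal m) π := by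
        rw [← hexp]
        exact eLpNorm_comp_fst_sub_comp_snd_le
          (Kernel.map_comp_kpow_of_invariant measurable_fst hQ₁ hinv (by simp) t)
          (Kernel.map_comp_kpow_of_invariant measurable_snd hQ₂ hinv (by simp) t)
          hmeas.aestronglyMeasurable
          (ofReal_le_ofReal hpm.le) (by simpa using hm)
    _ ≤ _ := by
        rw [hhm]
        gcongr
        exact measure_comp_kpow_compl_le_lintegral_lt_meetTime hQd hη _
          (measurableSet_eq_fun (hmeas.comp measurable_fst) (hmeas.comp measurable_snd))
          (fun w hw => congrArg h hw) t

/-- `L^p(π)` bound on `P^t h` in terms of the survival function of the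
meeting time under `π ⊗ π`. -/
theorem Lp_bound_kernel_iterate {S : Type*} [MeasurableSpace S]
    (P : ProbabilityTheory.Kernel S S) [IsMarkovKernel P]
    (π : MeasureTheory.Measure S) [IsProbabilityMeasure π]
    (hinv : π.bind (fun x => P x) = π)
    (Q : ProbabilityTheory.Kernel (S × S) (S × S)) [IsMarkovKernel Q]
    (hQ : IsFaithfulCoupling P Q)
    (η : ProbabilityTheory.Kernel (S × S) (ℕ → S × S))
    (hη : ∀ p : S × S, IsTrajMeasure Q (MeasureTheory.Measure.dirac p) (η p))
    (h : S → ℝ) (hmeas : Measurable h) (hmean : ∫ x, h x ∂π = 0)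
    (m : ℝ) (hm : 1 ≤ m) (hLm : ∫⁻ x, (‖h x‖₊ : ℝ≥0∞) ^ m ∂π < ⊤)
    (p : ℝ) (hp : 1 ≤ p) (hpm : p < m) :
    ∀ t : ℕ,
      (∫⁻ x, (‖∫ z, h z ∂((kpow P t) x)‖₊ : ℝ≥0∞) ^ p ∂π) ^ (1 / p) ≤
        2 * (∫⁻ q, η q {ω | (t : ℝ≥0∞) < meetTime ω} ∂(π.prod π)) ^ ((m - p) / (m * p)) *
          (∫⁻ x, (‖h x‖₊ : ℝ≥0∞) ^ m ∂π) ^ (1 / m) :=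
  Lp_bound_kernel_iterate_general P π hinv Q hQ η hη h hmeas hmean m hm hLm p hp hpm
end

section
/- Let P be a Markov kernel on X, G : X×X → [0,1] measurable, and S_ν(n) = E_ν[∏_{i=0}^{n−1} G(X_i, X_{i+1})] as above. Suppose there are constants C₁, C₂ ≥ 0 and α, β ∈ (0,1), a point x ∈ X and a probability measure μ such that for all n ∈ ℕ, ‖P^n(x,·) − μ‖_TV ≤ C₁ α^n and S_μ(n) ≤ C₂ β^n. Then for all n ∈ ℕ, S_{δ_x}(n) ≤ (C₂/β + 2C₁) · γ^n, where γ = β^{log(α)/(log(β)+log(α))}. -/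
/-!
Write `S_x(n) = h_n(x)`, where `h_0 = 1` and `h_{k+1}(z) = ∫ G(z, y) h_k(y) P(z, dy)`.
Since `0 ≤ G ≤ 1`, dropping the first `m` factors gives `h_n(x) ≤ (P^m h_{n-m})(x)`, and since
`0 ≤ h_{n-m} ≤ 1` the layer-cake formula bounds this by
`μ(h_{n-m}) + ‖P^m(x,·) − μ‖_TV = S_μ(n-m) + ‖P^m(x,·) − μ‖_TV ≤ C₂ β^{n-m} + C₁ α^m`.
With `θ = log α / (log β + log α)` one has `α^{1-θ} = β^θ = γ`, so `m = ⌈(1 - θ) n⌉` makes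
both terms of order `γ^n`.
-/

open MeasureTheory ProbabilityTheory ENNReal Filter Topology

open Set

section UnitIntervalValued

variable {T : Type*} [MeasurableSpace T] {ν : Measure T} {f : T → ℝ}

theorem integrable_of_forall_mem_Icc [IsFiniteMeasure ν] (hf : Measurable f)
    (hf01 : ∀ z, f z ∈ Icc (0 : ℝ) 1) : Integrable f ν :=
  .of_bound hf.aestronglyMeasurable 1 <| ae_of_all _ fun z => by
    rw [Real.norm_of_nonneg (hf01 z).1]
    exact (hf01 z).2

theorem integral_mem_Icc_of_forall_mem_Icc [IsProbabilityMeasure ν] (hf : Measurable f)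
    (hf01 : ∀ z, f z ∈ Icc (0 : ℝ) 1) : ∫ z, f z ∂ν ∈ Icc (0 : ℝ) 1 :=
  ⟨integral_nonneg fun z => (hf01 z).1, by
    simpa using integral_mono (integrable_of_forall_mem_Icc (ν := ν) hf hf01) (integrable_const 1)
      fun z => (hf01 z).2⟩

end UnitIntervalValued

section TotalVariation

variable {S : Type*} [MeasurableSpace S] {ν₁ ν₂ : Measure S}

theorem measureReal_le_add_tvDist [IsFiniteMeasure ν₁] [IsFiniteMeasure ν₂] {A : Set S}
    (hA : MeasurableSet A) : ν₁.real A ≤ ν₂.real A + tvDist ν₁ ν₂ := by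
  have hbdd : BddAbove (range fun B : {B : Set S // MeasurableSet B} =>
      |ν₁.real B.1 - ν₂.real B.1|) := by
    refine ⟨ν₁.real univ + ν₂.real univ, ?_⟩
    rintro _ ⟨B, rfl⟩
    have h₁ := measureReal_mono (μ := ν₁) (subset_univ B.1)
    have h₂ := measureReal_mono (μ := ν₂) (subset_univ B.1)
    rw [abs_le]
    constructor <;> linarith [measureReal_nonneg (μ := ν₁) (s := B.1),
      measureReal_nonneg (μ := ν₂) (s := B.1)]
  have hA' : |ν₁.real A - ν₂.real A| ≤ tvDist ν₁ ν₂ := le_ciSup hbdd ⟨A, hA⟩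
  linarith [le_of_abs_le hA']

theorem integral_le_integral_add_tvDist [IsProbabilityMeasure ν₁] [IsProbabilityMeasure ν₂]
    {f : S → ℝ} (hf : Measurable f) (hf01 : ∀ z, f z ∈ Icc (0 : ℝ) 1) :
    ∫ z, f z ∂ν₁ ≤ ∫ z, f z ∂ν₂ + tvDist ν₁ ν₂ := by
  have layerCake : ∀ (ν : Measure S) [IsProbabilityMeasure ν],
      ∫ z, f z ∂ν = ∫ t in Ioc 0 1, ν.real {a | t ≤ f a} := fun ν _ =>
    (integrable_of_forall_mem_Icc hf hf01).integral_eq_integral_Ioc_meas_le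
      (ae_of_all _ fun z => (hf01 z).1) (ae_of_all _ fun z => (hf01 z).2)
  have integrableOn : ∀ (ν : Measure S) [IsProbabilityMeasure ν],
      IntegrableOn (fun t => ν.real {a | t ≤ f a}) (Ioc 0 1) := fun ν _ =>
    have antitone : Antitone fun t : ℝ => ν.real {a | t ≤ f a} := fun _ _ hst =>
      measureReal_mono fun _ h => hst.trans h
    Measure.integrableOn_of_bounded (M := 1) measure_Ioc_lt_top.ne
      antitone.measurable.aestronglyMeasurable
      (ae_of_all _ fun t => by
        rw [Real.norm_of_nonneg measureReal_nonneg]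
        exact measureReal_le_one)
  rw [layerCake ν₁, layerCake ν₂]
  calc ∫ t in Ioc 0 1, ν₁.real {a | t ≤ f a}
      ≤ ∫ t in Ioc 0 1, (ν₂.real {a | t ≤ f a} + tvDist ν₁ ν₂) :=
        setIntegral_mono (integrableOn ν₁) ((integrableOn ν₂).add (integrable_const _))
          fun t => measureReal_le_add_tvDist (measurableSet_le measurable_const hf)
    _ = (∫ t in Ioc 0 1, ν₂.real {a | t ≤ f a}) + tvDist ν₁ ν₂ := by
        simp [integral_add (integrableOn ν₂) (integrable_const _)]
end TotalVariation

section PathProduct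

variable {S : Type*} [MeasurableSpace S] {P : Kernel S S} {G : S × S → ℝ}

instance isMarkovKernel_kpow (P : Kernel S S) [IsMarkovKernel P] :
    ∀ n, IsMarkovKernel (kpow P n)
  | 0 => by rw [kpow]; infer_instance
  | n + 1 => by
      have := isMarkovKernel_kpow P n
      rw [kpow]; infer_instance

/-- `pathProduct P G n z = E_z[∏_{i<n} G(X_i, X_{i+1})]`. -/
noncomputable def pathProduct (P : Kernel S S) (G : S × S → ℝ) : ℕ → S → ℝ
  | 0 => fun _ => 1
  | n + 1 => fun z => ∫ y, G (z, y) * pathProduct P G n y ∂(P z)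

theorem measurable_pathProduct [IsSFiniteKernel P] (hG : Measurable G) :
    ∀ n, Measurable (pathProduct P G n)
  | 0 => measurable_const
  | n + 1 =>
      ((hG.mul ((measurable_pathProduct hG n).comp measurable_snd)).stronglyMeasurable
        |>.integral_kernel_prod_right' (κ := P)).measurable

variable [IsMarkovKernel P]

theorem pathProduct_mem_Icc (hG : Measurable G) (hG01 : ∀ q, G q ∈ Icc (0 : ℝ) 1) :
    ∀ n z, pathProduct P G n z ∈ Icc (0 : ℝ) 1
  | 0, _ => unitInterval.one_mem
  | n + 1, _ =>
      integral_mem_Icc_of_forall_mem_Icc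
        ((hG.comp measurable_prodMk_left).mul (measurable_pathProduct hG n))
        fun y => unitInterval.mul_mem (hG01 _) (pathProduct_mem_Icc hG hG01 n y)

theorem pathProduct_succ_le (hG : Measurable G) (hG01 : ∀ q, G q ∈ Icc (0 : ℝ) 1)
    (n : ℕ) (z : S) : pathProduct P G (n + 1) z ≤ ∫ y, pathProduct P G n y ∂(P z) :=
  integral_mono
    (integrable_of_forall_mem_Icc ((hG.comp measurable_prodMk_left).mul
      (measurable_pathProduct hG n))
      fun y => unitInterval.mul_mem (hG01 _) (pathProduct_mem_Icc hG hG01 n y))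
    (integrable_of_forall_mem_Icc (measurable_pathProduct hG n) (pathProduct_mem_Icc hG hG01 n))
    fun y => mul_le_of_le_one_left (pathProduct_mem_Icc hG hG01 n y).1 (hG01 _).2

theorem pathProduct_add_le_integral_kpow (hG : Measurable G)
    (hG01 : ∀ q, G q ∈ Icc (0 : ℝ) 1) (n : ℕ) :
    ∀ m z, pathProduct P G (n + m) z ≤ ∫ y, pathProduct P G n y ∂(kpow P m z)
  | 0, _ => by
      rw [kpow, Kernel.id_apply,
        integral_dirac' _ _ (measurable_pathProduct hG n).stronglyMeasurable]
      rfl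
  | m + 1, z => by
      have hPn := measurable_pathProduct (P := P) hG n
      have hP01 := pathProduct_mem_Icc (P := P) hG hG01 n
      calc pathProduct P G (n + m + 1) z
          ≤ ∫ y, pathProduct P G (n + m) y ∂(P z) := pathProduct_succ_le hG hG01 _ z
        _ ≤ ∫ y, ∫ w, pathProduct P G n w ∂(kpow P m y) ∂(P z) :=
            integral_mono
              (integrable_of_forall_mem_Icc (measurable_pathProduct hG _)
                (pathProduct_mem_Icc hG hG01 _))
              (integrable_of_forall_mem_Icc
                (hPn.stronglyMeasurable.integral_kernel.measurable)
                fun y => integral_mem_Icc_of_forall_mem_Icc hPn hP01)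
              fun y => pathProduct_add_le_integral_kpow hG hG01 n m y
        _ = ∫ y, pathProduct P G n y ∂(kpow P (m + 1) z) :=
            (Kernel.integral_comp (integrable_of_forall_mem_Icc hPn hP01)).symm

end PathProduct

section Trajectory

variable {S : Type*} [MeasurableSpace S] {P : Kernel S S} [IsMarkovKernel P]
  {ν : Measure S} {η : Measure (ℕ → S)} {G : S × S → ℝ}

theorem IsTrajMeasure.integral_mul_step (hη : IsTrajMeasure P ν η) {n : ℕ}
    {Φ : (Fin (n + 1) → S) → ℝ} (hΦ : Measurable Φ) (hΦ01 : ∀ v, Φ v ∈ Icc (0 : ℝ) 1)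
    {g : S × S → ℝ} (hg : Measurable g) (hg01 : ∀ q, g q ∈ Icc (0 : ℝ) 1) :
    ∫ ω, Φ (fun i : Fin (n + 1) => ω i) * g (ω n, ω (n + 1)) ∂η =
      ∫ ω, Φ (fun i : Fin (n + 1) => ω i) * ∫ y, g (ω n, y) ∂(P (ω n)) ∂η := by
  obtain ⟨_, -, hstep⟩ := hη
  have hinit : Measurable fun ω : ℕ → S => fun i : Fin (n + 1) => ω i :=
    measurable_pi_lambda _ fun i => measurable_pi_apply _
  set F : (Fin (n + 1) → S) × S → ℝ := fun p => Φ p.1 * g (p.1 (Fin.last n), p.2)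
  have hF : Measurable F := (hΦ.comp measurable_fst).mul
    (hg.comp (((measurable_pi_apply _).comp measurable_fst).prodMk measurable_snd))
  have hF01 : ∀ p, F p ∈ Icc (0 : ℝ) 1 := fun p => unitInterval.mul_mem (hΦ01 _) (hg01 _)
  have hstepped : Measurable fun v : Fin (n + 1) → S =>
      Φ v * ∫ y, g (v (Fin.last n), y) ∂(P (v (Fin.last n))) :=
    hΦ.mul ((hg.stronglyMeasurable.integral_kernel_prod_right' (κ := P)).measurable.comp
      (measurable_pi_apply _))
  have : IsProbabilityMeasure (η.map fun ω : ℕ → S => fun i : Fin (n + 1) => ω i) :=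
    Measure.isProbabilityMeasure_map hinit.aemeasurable
  calc ∫ ω, Φ (fun i : Fin (n + 1) => ω i) * g (ω n, ω (n + 1)) ∂η
      = ∫ p, F p ∂(η.map fun ω => ((fun i : Fin (n + 1) => ω i), ω (n + 1))) :=
        (integral_map (hinit.prodMk (measurable_pi_apply _)).aemeasurable
          hF.aestronglyMeasurable).symm
    _ = ∫ v, Φ v * ∫ y, g (v (Fin.last n), y) ∂(P (v (Fin.last n)))
          ∂(η.map fun ω : ℕ → S => fun i : Fin (n + 1) => ω i) := by
        rw [hstep n, Measure.integral_compProd (integrable_of_forall_mem_Icc hF hF01)]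
        simp only [F, Kernel.comap_apply, integral_const_mul]
    _ = ∫ ω, Φ (fun i : Fin (n + 1) => ω i) * ∫ y, g (ω n, y) ∂(P (ω n)) ∂η :=
        integral_map hinit.aemeasurable hstepped.aestronglyMeasurable

theorem IsTrajMeasure.integral_prod_mul_pathProduct (hη : IsTrajMeasure P ν η)
    (hG : Measurable G) (hG01 : ∀ q, G q ∈ Icc (0 : ℝ) 1) :
    ∀ n k, ∫ ω, (∏ i ∈ Finset.range n, G (ω i, ω (i + 1))) * pathProduct P G k (ω n) ∂η =
      ∫ z, pathProduct P G (n + k) z ∂ν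
  | 0, k => by
      simp only [Finset.prod_range_zero, one_mul, zero_add]
      rw [← hη.2.1, integral_map (measurable_pi_apply 0).aemeasurable
        (measurable_pathProduct hG k).aestronglyMeasurable]
  | n + 1, k => by
      have hΦ : Measurable fun v : Fin (n + 1) → S => ∏ i : Fin n, G (v i.castSucc, v i.succ) :=
        Finset.measurable_prod _ fun i _ =>
          hG.comp ((measurable_pi_apply _).prodMk (measurable_pi_apply _))
      have hg : Measurable fun q : S × S => G q * pathProduct P G k q.2 :=
        hG.mul ((measurable_pathProduct hG k).comp measurable_snd)
      have step := hη.integral_mul_step hΦ (fun v => unitInterval.prod_mem fun i _ => hG01 _) hg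
        (fun q => unitInterval.mul_mem (hG01 q) (pathProduct_mem_Icc hG hG01 k q.2))
      have hrestrict : ∀ ω : ℕ → S, ∏ i : Fin n, G (ω i, ω (i + 1)) =
          ∏ i ∈ Finset.range n, G (ω i, ω (i + 1)) := fun ω =>
        Fin.prod_univ_eq_prod_range (fun i => G (ω i, ω (i + 1))) n
      simp only [Fin.val_castSucc, Fin.val_succ, hrestrict] at step
      calc ∫ ω, (∏ i ∈ Finset.range (n + 1), G (ω i, ω (i + 1))) *
            pathProduct P G k (ω (n + 1)) ∂η
          = ∫ ω, (∏ i ∈ Finset.range n, G (ω i, ω (i + 1))) *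
              pathProduct P G (k + 1) (ω n) ∂η := by
            simp only [Finset.prod_range_succ, mul_assoc]
            exact step
        _ = ∫ z, pathProduct P G (n + 1 + k) z ∂ν := by
            rw [integral_prod_mul_pathProduct hη hG hG01 n (k + 1), Nat.add_right_comm, add_assoc]

theorem IsTrajMeasure.integral_prod_eq_integral_pathProduct (hη : IsTrajMeasure P ν η)
    (hG : Measurable G) (hG01 : ∀ q, G q ∈ Icc (0 : ℝ) 1) (n : ℕ) :
    ∫ ω, ∏ i ∈ Finset.range n, G (ω i, ω (i + 1)) ∂η = ∫ z, pathProduct P G n z ∂ν := by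
  simpa [pathProduct] using hη.integral_prod_mul_pathProduct hG hG01 n 0

theorem IsTrajMeasure.integral_prod_eq_pathProduct {z : S}
    (hη : IsTrajMeasure P (Measure.dirac z) η) (hG : Measurable G)
    (hG01 : ∀ q, G q ∈ Icc (0 : ℝ) 1) (n : ℕ) :
    ∫ ω, ∏ i ∈ Finset.range n, G (ω i, ω (i + 1)) ∂η = pathProduct P G n z := by
  rw [hη.integral_prod_eq_integral_pathProduct hG hG01 n,
    integral_dirac' _ _ (measurable_pathProduct hG n).stronglyMeasurable]

theorem integral_prod_bind_eq_integral_pathProduct {ξ : Kernel S (ℕ → S)}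
    (hξ : ∀ z, IsTrajMeasure P (Measure.dirac z) (ξ z)) (μ : Measure S) [IsFiniteMeasure μ]
    (hG : Measurable G) (hG01 : ∀ q, G q ∈ Icc (0 : ℝ) 1) (n : ℕ) :
    ∫ ω, ∏ i ∈ Finset.range n, G (ω i, ω (i + 1)) ∂(μ.bind fun z => ξ z) =
      ∫ z, pathProduct P G n z ∂μ := by
  have : IsMarkovKernel ξ := ⟨fun z => (hξ z).1⟩
  have hprod : Measurable fun ω : ℕ → S => ∏ i ∈ Finset.range n, G (ω i, ω (i + 1)) :=
    Finset.measurable_prod _ fun i _ =>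
      hG.comp ((measurable_pi_apply i).prodMk (measurable_pi_apply (i + 1)))
  rw [show (μ.bind fun z => ξ z) = ξ ∘ₘ μ from rfl, Measure.comp_eq_comp_const_apply,
    Kernel.integral_comp (integrable_of_forall_mem_Icc hprod
      fun ω => unitInterval.prod_mem fun i _ => hG01 _)]
  exact integral_congr_ae (ae_of_all _ fun z => (hξ z).integral_prod_eq_pathProduct hG hG01 n)

end Trajectory

theorem exists_split_pow_le {α β : ℝ} (hα : α ∈ Ioo (0 : ℝ) 1) (hβ : β ∈ Ioo (0 : ℝ) 1)
    (n : ℕ) :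
    ∃ m ≤ n, α ^ m ≤ (β ^ (Real.log α / (Real.log β + Real.log α))) ^ n ∧
      β ^ (n - m) ≤ (β ^ (Real.log α / (Real.log β + Real.log α))) ^ n / β := by
  set θ := Real.log α / (Real.log β + Real.log α)
  have hlogα := Real.log_neg hα.1 hα.2
  have hlogβ := Real.log_neg hβ.1 hβ.2
  have hθ : θ * (Real.log β + Real.log α) = Real.log α := div_mul_cancel₀ _ (by linarith)
  have hθ0 : 0 < θ := div_pos_of_neg_of_neg hlogα (by linarith)
  have hθ1 : θ < 1 := by nlinarith
  have hγ : (β ^ θ) ^ n = β ^ (θ * n) := by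
    rw [← Real.rpow_natCast, ← Real.rpow_mul hβ.1.le]
  have hbalance : α ^ ((1 - θ) * n) = β ^ (θ * n) := by
    rw [Real.rpow_def_of_pos hα.1, Real.rpow_def_of_pos hβ.1]
    congr 1
    linear_combination (-(n : ℝ)) * hθ
  have hm : ⌈(1 - θ) * n⌉₊ ≤ n := Nat.ceil_le.mpr (by nlinarith [n.cast_nonneg (α := ℝ)])
  refine ⟨_, hm, ?_, ?_⟩
  · rw [hγ, ← hbalance, ← Real.rpow_natCast]
    exact Real.rpow_le_rpow_of_exponent_ge hα.1 hα.2.le (Nat.le_ceil _)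
  · have hceil := Nat.ceil_lt_add_one (mul_nonneg (sub_nonneg.2 hθ1.le) n.cast_nonneg)
    rw [hγ, ← Real.rpow_sub_one hβ.1.ne', ← Real.rpow_natCast, Nat.cast_sub hm]
    exact Real.rpow_le_rpow_of_exponent_ge hβ.1 hβ.2.le (by linarith)

/-- Combining a geometric TV convergence rate from `x` to `μ` with a
geometric decay of `S_μ(n)` yields a geometric decay of `S_{δ_x}(n)` with the combined
rate `β^{log α/(log β + log α)}`. -/
theorem product_functional_combined_rate {S : Type*} [MeasurableSpace S]
    (P : ProbabilityTheory.Kernel S S) [IsMarkovKernel P]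
    (ξ : ProbabilityTheory.Kernel S (ℕ → S))
    (hξ : ∀ x : S, IsTrajMeasure P (MeasureTheory.Measure.dirac x) (ξ x))
    (G : S × S → ℝ) (hGmeas : Measurable G) (hG01 : ∀ q, G q ∈ Set.Icc (0 : ℝ) 1)
    (μ : MeasureTheory.Measure S) [IsProbabilityMeasure μ]
    (x : S) (C₁ C₂ α β : ℝ) (hC₁ : 0 ≤ C₁) (hC₂ : 0 ≤ C₂)
    (hα : α ∈ Set.Ioo (0 : ℝ) 1) (hβ : β ∈ Set.Ioo (0 : ℝ) 1)
    (htv : ∀ n : ℕ, tvDist ((kpow P n) x) μ ≤ C₁ * α ^ n)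
    (hSμ : ∀ n : ℕ,
      ∫ ω, ∏ i ∈ Finset.range n, G (ω i, ω (i + 1)) ∂(μ.bind fun z => ξ z) ≤ C₂ * β ^ n) :
    ∀ n : ℕ,
      ∫ ω, ∏ i ∈ Finset.range n, G (ω i, ω (i + 1)) ∂(ξ x) ≤
        (C₂ / β + 2 * C₁) * (β ^ (Real.log α / (Real.log β + Real.log α))) ^ n := by
  intro n
  obtain ⟨m, hmn, hαm, hβm⟩ := exists_split_pow_le hα hβ n
  set γ := β ^ (Real.log α / (Real.log β + Real.log α))
  have hγn : 0 ≤ γ ^ n := pow_nonneg (Real.rpow_nonneg hβ.1.le _) n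
  calc ∫ ω, ∏ i ∈ Finset.range n, G (ω i, ω (i + 1)) ∂(ξ x)
      = pathProduct P G (n - m + m) x := by
        rw [Nat.sub_add_cancel hmn, (hξ x).integral_prod_eq_pathProduct hGmeas hG01]
    _ ≤ ∫ y, pathProduct P G (n - m) y ∂(kpow P m x) :=
        pathProduct_add_le_integral_kpow hGmeas hG01 _ _ _
    _ ≤ ∫ y, pathProduct P G (n - m) y ∂μ + tvDist (kpow P m x) μ :=
        integral_le_integral_add_tvDist (measurable_pathProduct hGmeas _)
          (pathProduct_mem_Icc hGmeas hG01 _)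
    _ ≤ C₂ * β ^ (n - m) + C₁ * α ^ m := by
        rw [← integral_prod_bind_eq_integral_pathProduct hξ μ hGmeas hG01]
        exact add_le_add (hSμ _) (htv m)
    _ ≤ C₂ * (γ ^ n / β) + C₁ * γ ^ n := by gcongr
    _ ≤ (C₂ / β + 2 * C₁) * γ ^ n := by
        have := mul_nonneg hC₁ hγn
        linarith [show (C₂ / β + 2 * C₁) * γ ^ n = C₂ * (γ ^ n / β) + C₁ * γ ^ n + C₁ * γ ^ n by
          ring]
end

section
/- Let φ ∈ (0,1) and let P be the AR(1) Markov kernel on ℝ given by P(x,·) = N(φx, 1) (the Gaussian measure with mean φx and variance 1). Set V(x) = 1 + (1−φ²)x², β = (1+φ²)/2, C = {x ∈ ℝ : x² ≤ 3/(1−φ²)}, b = 2−φ², G(x,x') = max(0, 1 − exp(−2φ x x')), and h = 1 − (1/√2) exp(−3φ²/(1−φ²)). Then: (i) ∫ V(x') P(x,dx') ≤ β V(x) for all x ∉ C and ≤ b V(x) for all x ∈ C; (ii) sup_{x∈C} ∫ G(x,x') P(x,dx') ≤ h; (iii) for every x ∈ ℝ and n ∈ ℕ, E_x[∏_{i=0}^{n−1}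 G(X_i, X_{i+1})] ≤ V(x) β̃^n, where δ = log(h)/(log(h)+log(β)−log(b)) ∈ (0,1) and β̃ = β^δ. -/
open MeasureTheory ProbabilityTheory ENNReal Filter Topology

/-!
Since `P(x,·) = N(φx, 1)`, one has `∫ V dP(x) = 1 + (1 - φ²)(1 + φ²x²)`, and both drift
inequalities are elementary. For the coupling bound write `G(x,·) = 1 - min(1, e^{-2φxz})`: the
density of `N(m, 1)` times `min(1, e^{-2mz})` is the minimum of the densities of `N(±m, 1)`, which
dominates `e^{-m²-z²}/√(2π)`, so `∫ G(x,·) dP(x) ≤ 1 - e^{-(φx)²}/√2`.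

For the geometric bound, Hölder's inequality with exponents `1 - δ` and `δ`, together with `G ≤ 1`,
gives `∫ G(y,z) V(z)^δ P(y,dz) ≤ (∫ G(y,·) dP(y))^{1-δ} (PV(y))^δ`. Off `C` this is at most
`(β V(y))^δ`; on `C` it is at most `h^{1-δ} (b V(y))^δ`, and `δ` is exactly the exponent with
`h^{1-δ} b^δ = β^δ`. So `V^δ` is a Lyapunov function with rate `β^δ` for the kernel twisted by `G`,
and iterating with the Markov property gives `E_x[∏ G(X_i, X_{i+1}) V(X_n)^δ] ≤ β^{δn} V(x)^δ`;
finally `1 ≤ V^δ ≤ V`.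
-/

namespace IsTrajMeasure

variable {S : Type*} [MeasurableSpace S] {P : Kernel S S} {ν : Measure S} {μ : Measure (ℕ → S)}

lemma lintegral_mul_transition [IsSFiniteKernel P] (hμ : IsTrajMeasure P ν μ) (n : ℕ)
    {F : (Fin (n + 1) → S) → ℝ≥0∞} (hF : Measurable F) {g : S × S → ℝ≥0∞} (hg : Measurable g) :
    ∫⁻ ω, F (fun i => ω i) * g (ω n, ω (n + 1)) ∂μ
      = ∫⁻ ω, F (fun i => ω i) * ∫⁻ y, g (ω n, y) ∂(P (ω n)) ∂μ := by
  have := hμ.1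
  have hprefix : Measurable fun ω : ℕ → S => fun i : Fin (n + 1) => ω i := by fun_prop
  have hf : Measurable fun p : (Fin (n + 1) → S) × S => F p.1 * g (p.1 (Fin.last n), p.2) := by
    fun_prop
  have hκ : Measurable fun v : Fin (n + 1) → S =>
      F v * ∫⁻ y, g (v (Fin.last n), y) ∂(P (v (Fin.last n))) :=
    hF.mul (hg.lintegral_kernel_prod_right'.comp (measurable_pi_apply _))
  calc ∫⁻ ω, F (fun i => ω i) * g (ω n, ω (n + 1)) ∂μ
      = ∫⁻ p, F p.1 * g (p.1 (Fin.last n), p.2)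
          ∂(μ.map fun ω => ((fun i : Fin (n + 1) => ω i), ω (n + 1))) := by
        rw [lintegral_map hf (by fun_prop)]
        simp
    _ = ∫⁻ v, F v * ∫⁻ y, g (v (Fin.last n), y) ∂(P (v (Fin.last n)))
          ∂(μ.map fun ω => fun i : Fin (n + 1) => ω i) := by
        rw [hμ.2.2 n, Measure.lintegral_compProd hf]
        congr 1 with v
        exact lintegral_const_mul (F v) (hg.comp measurable_prodMk_left)
    _ = _ := by
        rw [lintegral_map hκ hprefix]
        simp

lemma lintegral_prod_mul_le [IsSFiniteKernel P] (hμ : IsTrajMeasure P ν μ)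
    {G : S × S → ℝ≥0∞} (hG : Measurable G) {W : S → ℝ≥0∞} (hW : Measurable W) {r : ℝ≥0∞}
    (hstep : ∀ y, ∫⁻ z, G (y, z) * W z ∂(P y) ≤ r * W y) (n : ℕ) :
    ∫⁻ ω, (∏ i ∈ Finset.range n, G (ω i, ω (i + 1))) * W (ω n) ∂μ ≤ r ^ n * ∫⁻ y, W y ∂ν := by
  induction n with
  | zero =>
    rw [← hμ.2.1, lintegral_map hW (measurable_pi_apply 0)]
    simp
  | succ n ih =>
    set F : (Fin (n + 1) → S) → ℝ≥0∞ := fun v => ∏ i : Fin n, G (v i.castSucc, v i.succ)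
    have hF : Measurable F := by fun_prop
    have hprefix (ω : ℕ → S) : ∏ i ∈ Finset.range n, G (ω i, ω (i + 1)) = F (fun i => ω i) := by
      simp [F, Fin.prod_univ_eq_prod_range (fun i => G (ω i, ω (i + 1)))]
    calc ∫⁻ ω, (∏ i ∈ Finset.range (n + 1), G (ω i, ω (i + 1))) * W (ω (n + 1)) ∂μ
        = ∫⁻ ω, F (fun i => ω i) * (G (ω n, ω (n + 1)) * W (ω (n + 1))) ∂μ := by
          simp_rw [Finset.prod_range_succ, hprefix, mul_assoc]
      _ = ∫⁻ ω, F (fun i => ω i) * ∫⁻ y, G (ω n, y) * W y ∂(P (ω n)) ∂μ :=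
          hμ.lintegral_mul_transition n hF (g := fun q => G q * W q.2) (by fun_prop)
      _ ≤ ∫⁻ ω, F (fun i => ω i) * (r * W (ω n)) ∂μ := by gcongr with ω; exact hstep _
      _ = r * ∫⁻ ω, (∏ i ∈ Finset.range n, G (ω i, ω (i + 1))) * W (ω n) ∂μ := by
          rw [← lintegral_const_mul _ (by fun_prop)]
          simp_rw [hprefix]
          congr 1 with ω
          ring
      _ ≤ r ^ (n + 1) * ∫⁻ y, W y ∂ν := by
          rw [pow_succ', mul_assoc]
          gcongr

end IsTrajMeasure

lemma ENNReal.lintegral_mul_rpow_le {α : Type*} [MeasurableSpace α] {μ : Measure α}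
    {g w : α → ℝ≥0∞} (hg : AEMeasurable g μ) (hw : AEMeasurable w μ) {δ : ℝ} (hδ0 : 0 ≤ δ)
    (hδ1 : δ ≤ 1) :
    ∫⁻ a, g a * w a ^ δ ∂μ ≤ (∫⁻ a, g a ∂μ) ^ (1 - δ) * (∫⁻ a, g a * w a ∂μ) ^ δ := by
  calc ∫⁻ a, g a * w a ^ δ ∂μ = ∫⁻ a, g a ^ (1 - δ) * (g a * w a) ^ δ ∂μ := by
        congr 1 with a
        rw [ENNReal.mul_rpow_of_nonneg _ _ hδ0, ← mul_assoc,
          ← ENNReal.rpow_add_of_nonneg _ _ (sub_nonneg.2 hδ1) hδ0, sub_add_cancel, ENNReal.rpow_one]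
    _ ≤ _ := ENNReal.lintegral_mul_norm_pow_le hg (hg.mul hw) (sub_nonneg.2 hδ1) hδ0
        (sub_add_cancel 1 δ)

lemma lintegral_ofReal_mul_rpow_le {α : Type*} [MeasurableSpace α] {μ : Measure α}
    {g w : α → ℝ} (hgi : Integrable g μ) (hg0 : ∀ a, 0 ≤ g a) (hg1 : ∀ a, g a ≤ 1)
    (hwi : Integrable w μ) (hw0 : ∀ a, 0 ≤ w a) {δ : ℝ} (hδ0 : 0 ≤ δ) (hδ1 : δ ≤ 1) :
    ∫⁻ a, ENNReal.ofReal (g a) * ENNReal.ofReal (w a ^ δ) ∂μ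
      ≤ ENNReal.ofReal ((∫ a, g a ∂μ) ^ (1 - δ) * (∫ a, w a ∂μ) ^ δ) := by
  have hgw : ∫⁻ a, ENNReal.ofReal (g a) * ENNReal.ofReal (w a) ∂μ ≤ ∫⁻ a, ENNReal.ofReal (w a) ∂μ :=
    lintegral_mono fun a => mul_le_of_le_one_left zero_le (ENNReal.ofReal_le_one.2 (hg1 a))
  simp_rw [← ENNReal.ofReal_rpow_of_nonneg (hw0 _) hδ0]
  refine (ENNReal.lintegral_mul_rpow_le hgi.1.aemeasurable.ennreal_ofReal
    hwi.1.aemeasurable.ennreal_ofReal hδ0 hδ1).trans ?_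
  rw [ENNReal.ofReal_mul (Real.rpow_nonneg (integral_nonneg hg0) _),
    ← ENNReal.ofReal_rpow_of_nonneg (integral_nonneg hg0) (sub_nonneg.2 hδ1),
    ← ENNReal.ofReal_rpow_of_nonneg (integral_nonneg hw0) hδ0,
    ofReal_integral_eq_lintegral_ofReal hgi (ae_of_all _ hg0),
    ofReal_integral_eq_lintegral_ofReal hwi (ae_of_all _ hw0)]
  gcongr

section Drift

variable {S : Type*} [MeasurableSpace S] {P : Kernel S S} [IsMarkovKernel P]
  {G : S × S → ℝ} {V : S → ℝ} {C : Set S} {β b h δ : ℝ}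

lemma lintegral_ofReal_mul_rpow_le_of_drift (hGm : Measurable G) (hG0 : ∀ q, 0 ≤ G q)
    (hG1 : ∀ q, G q ≤ 1) (hV0 : ∀ z, 0 ≤ V z) (hVi : ∀ y, Integrable V (P y))
    (hβ : 0 ≤ β) (hb : 0 ≤ b) (hδ0 : 0 ≤ δ) (hδ1 : δ ≤ 1)
    (hout : ∀ y ∉ C, ∫ z, V z ∂(P y) ≤ β * V y) (hin : ∀ y ∈ C, ∫ z, V z ∂(P y) ≤ b * V y)
    (hGC : ∀ y ∈ C, ∫ z, G (y, z) ∂(P y) ≤ h) (hrate : h ^ (1 - δ) * b ^ δ = β ^ δ) (y : S) :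
    ∫⁻ z, ENNReal.ofReal (G (y, z)) * ENNReal.ofReal (V z ^ δ) ∂(P y)
      ≤ ENNReal.ofReal (β ^ δ) * ENNReal.ofReal (V y ^ δ) := by
  have hGi : Integrable (fun z => G (y, z)) (P y) :=
    (integrable_const 1).mono' (hGm.comp measurable_prodMk_left).aestronglyMeasurable
      (ae_of_all _ fun z => (Real.norm_of_nonneg (hG0 _)).trans_le (hG1 _))
  have hGint0 : 0 ≤ ∫ z, G (y, z) ∂(P y) := integral_nonneg fun z => hG0 _
  have hVint0 : 0 ≤ ∫ z, V z ∂(P y) := integral_nonneg hV0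
  refine (lintegral_ofReal_mul_rpow_le hGi (fun z => hG0 _) (fun z => hG1 _) (hVi y) hV0
    hδ0 hδ1).trans ?_
  rw [← ENNReal.ofReal_mul (Real.rpow_nonneg hβ _), ← Real.mul_rpow hβ (hV0 y)]
  refine ENNReal.ofReal_le_ofReal ?_
  by_cases hy : y ∈ C
  · calc (∫ z, G (y, z) ∂(P y)) ^ (1 - δ) * (∫ z, V z ∂(P y)) ^ δ
        ≤ h ^ (1 - δ) * (b * V y) ^ δ :=
          mul_le_mul (Real.rpow_le_rpow hGint0 (hGC y hy) (sub_nonneg.2 hδ1))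
            (Real.rpow_le_rpow hVint0 (hin y hy) hδ0) (by positivity)
            (Real.rpow_nonneg (hGint0.trans (hGC y hy)) _)
      _ = (β * V y) ^ δ := by
          rw [Real.mul_rpow hb (hV0 y), Real.mul_rpow hβ (hV0 y), ← mul_assoc, hrate]
  · calc (∫ z, G (y, z) ∂(P y)) ^ (1 - δ) * (∫ z, V z ∂(P y)) ^ δ
        ≤ 1 * (β * V y) ^ δ := by
          gcongr
          · exact Real.rpow_le_one hGint0
              ((integral_mono hGi (integrable_const 1) fun z => hG1 _).trans (by simp))
              (sub_nonneg.2 hδ1)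
          · exact hout y hy
      _ = (β * V y) ^ δ := one_mul _

theorem IsTrajMeasure.integral_prod_le_of_drift {μ : Measure (ℕ → S)} {x : S}
    (hμ : IsTrajMeasure P (Measure.dirac x) μ) (hGm : Measurable G) (hG0 : ∀ q, 0 ≤ G q)
    (hG1 : ∀ q, G q ≤ 1) (hVm : Measurable V) (hV1 : ∀ z, 1 ≤ V z)
    (hVi : ∀ y, Integrable V (P y)) (hβ : 0 ≤ β) (hb : 0 ≤ b) (hδ0 : 0 ≤ δ) (hδ1 : δ ≤ 1)
    (hout : ∀ y ∉ C, ∫ z, V z ∂(P y) ≤ β * V y) (hin : ∀ y ∈ C, ∫ z, V z ∂(P y) ≤ b * V y)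
    (hGC : ∀ y ∈ C, ∫ z, G (y, z) ∂(P y) ≤ h) (hrate : h ^ (1 - δ) * b ^ δ = β ^ δ) (n : ℕ) :
    ∫ ω, ∏ i ∈ Finset.range n, G (ω i, ω (i + 1)) ∂μ ≤ V x * (β ^ δ) ^ n := by
  have hV0 (z : S) : 0 ≤ V z := zero_le_one.trans (hV1 z)
  have hchain := hμ.lintegral_prod_mul_le (G := fun q => ENNReal.ofReal (G q))
    (W := fun z => ENNReal.ofReal (V z ^ δ)) (by fun_prop) (by fun_prop)
    (lintegral_ofReal_mul_rpow_le_of_drift hGm hG0 hG1 hV0 hVi hβ hb hδ0 hδ1 hout hin hGC hrate) n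
  rw [lintegral_dirac' x (by fun_prop)] at hchain
  rw [integral_eq_lintegral_of_nonneg_ae (ae_of_all _ fun ω => Finset.prod_nonneg fun i _ => hG0 _)
    (Finset.measurable_prod _ fun i _ => hGm.comp (by fun_prop)).aestronglyMeasurable]
  refine ENNReal.toReal_le_of_le_ofReal (mul_nonneg (hV0 x) (by positivity)) ?_
  calc ∫⁻ ω, ENNReal.ofReal (∏ i ∈ Finset.range n, G (ω i, ω (i + 1))) ∂μ
      ≤ ∫⁻ ω, (∏ i ∈ Finset.range n, ENNReal.ofReal (G (ω i, ω (i + 1))))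
          * ENNReal.ofReal (V (ω n) ^ δ) ∂μ := by
        gcongr with ω
        rw [ENNReal.ofReal_prod_of_nonneg fun i _ => hG0 _]
        exact le_mul_of_one_le_right zero_le
          (ENNReal.one_le_ofReal.2 (Real.one_le_rpow (hV1 _) hδ0))
    _ ≤ ENNReal.ofReal (β ^ δ) ^ n * ENNReal.ofReal (V x ^ δ) := hchain
    _ ≤ ENNReal.ofReal (V x * (β ^ δ) ^ n) := by
        rw [← ENNReal.ofReal_pow (by positivity), ← ENNReal.ofReal_mul (by positivity), mul_comm]
        gcongr
        simpa using Real.rpow_le_rpow_of_exponent_le (hV1 x) hδ1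

end Drift

section Gaussian

open Real

lemma integral_sq_gaussianReal (m : ℝ) (v : NNReal) :
    ∫ z, z ^ 2 ∂gaussianReal m v = v + m ^ 2 := by
  have h := variance_eq_sub (memLp_id_gaussianReal (μ := m) (v := v) 2)
  simp only [variance_id_gaussianReal, Pi.pow_apply, id_eq, integral_id_gaussianReal] at h
  linarith

lemma integrable_sq_gaussianReal (m : ℝ) (v : NNReal) :
    Integrable (fun z => z ^ 2) (gaussianReal m v) :=
  (memLp_id_gaussianReal 2).integrable_sq

lemma integral_min_one_exp_gaussianReal_ge (m : ℝ) :
    (√2)⁻¹ * rexp (-m ^ 2) ≤ ∫ z, min 1 (rexp (-(2 * m * z))) ∂gaussianReal m 1 := by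
  rw [integral_gaussianReal_eq_integral_smul one_ne_zero]
  have hpdf (z : ℝ) : gaussianPDFReal m 1 z = (√(2 * π))⁻¹ * rexp (-(z - m) ^ 2 / 2) := by
    simp [gaussianPDFReal]
  -- `(z - m)² / 2` and `(z + m)² / 2 = (z - m)² / 2 + 2mz` are both at most `z² + m²`
  have hpointwise (z : ℝ) : (√(2 * π))⁻¹ * rexp (-m ^ 2) * rexp (-1 * z ^ 2)
      ≤ gaussianPDFReal m 1 z • min 1 (rexp (-(2 * m * z))) := by
    rw [smul_eq_mul, hpdf, mul_assoc, mul_assoc, ← exp_add, mul_min_of_nonneg _ _ (exp_pos _).le,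
      mul_one, ← exp_add]
    gcongr
    exact le_min (exp_le_exp.2 (by nlinarith [sq_nonneg (z + m)]))
      (exp_le_exp.2 (by nlinarith [sq_nonneg (z - m)]))
  have hint : Integrable fun z => gaussianPDFReal m 1 z • min 1 (rexp (-(2 * m * z))) := by
    refine (integrable_gaussianPDFReal m 1).mono (by fun_prop) (ae_of_all _ fun z => ?_)
    rw [smul_eq_mul, norm_mul]
    exact mul_le_of_le_one_right (norm_nonneg _)
      (by rw [norm_of_nonneg (le_min zero_le_one (exp_pos _).le)]; exact min_le_left _ _)
  calc (√2)⁻¹ * rexp (-m ^ 2) = ∫ z, (√(2 * π))⁻¹ * rexp (-m ^ 2) * rexp (-1 * z ^ 2) := by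
        rw [integral_const_mul, integral_gaussian, div_one, sqrt_mul zero_le_two]
        field_simp
    _ ≤ _ := integral_mono ((integrable_exp_neg_mul_sq one_pos).const_mul _) hint hpointwise

lemma integral_max_zero_one_sub_exp_gaussianReal_le (m : ℝ) :
    ∫ z, max 0 (1 - rexp (-(2 * m * z))) ∂gaussianReal m 1 ≤ 1 - (√2)⁻¹ * rexp (-m ^ 2) := by
  have hint : Integrable (fun z => min 1 (rexp (-(2 * m * z)))) (gaussianReal m 1) :=
    (integrable_const 1).mono' (by fun_prop) (ae_of_all _ fun z => by
      rw [norm_of_nonneg (le_min zero_le_one (exp_pos _).le)]; exact min_le_left _ _)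
  have hmax (e : ℝ) : max 0 (1 - e) = 1 - min 1 e := by rw [← max_sub_sub_left, sub_self]
  simp_rw [hmax]
  rw [integral_sub (integrable_const 1) hint, integral_const, probReal_univ, one_smul]
  linarith [integral_min_one_exp_gaussianReal_ge m]

lemma integrable_one_add_mul_sq_gaussianReal (c m : ℝ) :
    Integrable (fun z => 1 + c * z ^ 2) (gaussianReal m 1) :=
  (integrable_const 1).add ((integrable_sq_gaussianReal m 1).const_mul c)

lemma integral_one_add_mul_sq_gaussianReal (c m : ℝ) :
    ∫ z, (1 + c * z ^ 2) ∂gaussianReal m 1 = 1 + c * (1 + m ^ 2) := by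
  rw [integral_add (integrable_const 1) ((integrable_sq_gaussianReal m 1).const_mul c),
    integral_const_mul, integral_sq_gaussianReal]
  simp

end Gaussian

section Exponent

open Real

lemma log_add_log_sub_log_neg {h β b : ℝ} (hh0 : 0 < h) (hh1 : h < 1) (hβ : 0 < β)
    (hβb : β < b) : log h + log β - log b < 0 := by
  linarith [log_neg hh0 hh1, log_lt_log hβ hβb]

lemma log_div_log_add_log_sub_log_mem_Ioo {h β b : ℝ} (hh0 : 0 < h) (hh1 : h < 1) (hβ : 0 < β)
    (hβb : β < b) : log h / (log h + log β - log b) ∈ Set.Ioo 0 1 := by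
  have hD := log_add_log_sub_log_neg hh0 hh1 hβ hβb
  exact ⟨div_pos_of_neg_of_neg (log_neg hh0 hh1) hD,
    (div_lt_one_of_neg hD).2 (by linarith [log_lt_log hβ hβb])⟩

lemma rpow_one_sub_mul_rpow_eq_rpow {h β b δ : ℝ} (hh : 0 < h) (hβ : 0 < β) (hb : 0 < b)
    (hδ : δ * (log h + log β - log b) = log h) : h ^ (1 - δ) * b ^ δ = β ^ δ := by
  rw [rpow_def_of_pos hh, rpow_def_of_pos hb, rpow_def_of_pos hβ, ← exp_add]
  congr 1
  linear_combination -hδ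

end Exponent

section AR1

open Real

lemma one_sub_inv_sqrt_two_mul_exp_neg_mem_Ioo {c : ℝ} (hc : 0 ≤ c) :
    1 - 1 / √2 * rexp (-c) ∈ Set.Ioo 0 1 := by
  have hsqrt : 1 < √2 := by rw [lt_sqrt zero_le_one]; norm_num
  have hexp : rexp (-c) ≤ 1 := exp_le_one_iff.2 (neg_nonpos.2 hc)
  have hlt : 1 / √2 * rexp (-c) < 1 :=
    calc 1 / √2 * rexp (-c) ≤ 1 / √2 := mul_le_of_le_one_right (by positivity) hexp
      _ < 1 := (div_lt_one (by positivity)).2 hsqrt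
  constructor <;> [linarith; linarith [show 0 < 1 / √2 * rexp (-c) by positivity]]

lemma ar1_drift_of_three_lt {φ x : ℝ} (hφ : φ ^ 2 < 1) (hx : 3 / (1 - φ ^ 2) < x ^ 2) :
    1 + (1 - φ ^ 2) * (1 + (φ * x) ^ 2) ≤ (1 + φ ^ 2) / 2 * (1 + (1 - φ ^ 2) * x ^ 2) := by
  have h3 : 3 < (1 - φ ^ 2) * x ^ 2 := by rwa [div_lt_iff₀' (by linarith)] at hx
  nlinarith [mul_le_mul_of_nonneg_left h3.le (sub_nonneg.2 hφ.le)]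

lemma ar1_drift_le (φ x : ℝ) (hφ : φ ^ 2 ≤ 1) :
    1 + (1 - φ ^ 2) * (1 + (φ * x) ^ 2) ≤ (2 - φ ^ 2) * (1 + (1 - φ ^ 2) * x ^ 2) := by
  nlinarith [mul_nonneg (mul_nonneg (sub_nonneg.2 hφ) (sub_nonneg.2 hφ)) (sq_nonneg x)]

lemma ar1_integral_coupling_le {φ x : ℝ} (hx : x ^ 2 ≤ 3 / (1 - φ ^ 2)) :
    ∫ z, max 0 (1 - rexp (-(2 * φ * x * z))) ∂gaussianReal (φ * x) 1
      ≤ 1 - 1 / √2 * rexp (-(3 * φ ^ 2 / (1 - φ ^ 2))) := by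
  have hbound := integral_max_zero_one_sub_exp_gaussianReal_le (φ * x)
  simp only [← mul_assoc] at hbound
  refine hbound.trans ?_
  have hsq : (φ * x) ^ 2 ≤ 3 * φ ^ 2 / (1 - φ ^ 2) :=
    calc (φ * x) ^ 2 = φ ^ 2 * x ^ 2 := mul_pow φ x 2
      _ ≤ φ ^ 2 * (3 / (1 - φ ^ 2)) := mul_le_mul_of_nonneg_left hx (sq_nonneg φ)
      _ = 3 * φ ^ 2 / (1 - φ ^ 2) := by ring
  rw [one_div]
  gcongr

end AR1

/-- Drift and minorization-type estimates for the AR(1) chain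
`P(x,·) = N(φx, 1)`, and the resulting geometric bound
`E_x[∏ G(X_i, X_{i+1})] ≤ V(x) β̃^n`. -/
theorem ar1_drift_bound
    (φ : ℝ) (hφ : φ ∈ Set.Ioo (0 : ℝ) 1)
    (P : ProbabilityTheory.Kernel ℝ ℝ)
    (hP : ∀ x : ℝ, P x = ProbabilityTheory.gaussianReal (φ * x) 1)
    (ξ : ProbabilityTheory.Kernel ℝ (ℕ → ℝ))
    (hξ : ∀ x : ℝ, IsTrajMeasure P (MeasureTheory.Measure.dirac x) (ξ x))
    (V : ℝ → ℝ) (hV : ∀ x, V x = 1 + (1 - φ ^ 2) * x ^ 2)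
    (β b h : ℝ) (hβ : β = (1 + φ ^ 2) / 2) (hb : b = 2 - φ ^ 2)
    (hh : h = 1 - (1 / Real.sqrt 2) * Real.exp (-(3 * φ ^ 2 / (1 - φ ^ 2))))
    (C : Set ℝ) (hC : C = {x : ℝ | x ^ 2 ≤ 3 / (1 - φ ^ 2)})
    (G : ℝ × ℝ → ℝ) (hG : ∀ q : ℝ × ℝ, G q = max 0 (1 - Real.exp (-(2 * φ * q.1 * q.2))))
    (δ : ℝ) (hδdef : δ = Real.log h / (Real.log h + Real.log β - Real.log b)) :
    (∀ x ∉ C, ∫ z, V z ∂(P x) ≤ β * V x) ∧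
      (∀ x ∈ C, ∫ z, V z ∂(P x) ≤ b * V x) ∧
      (∀ x ∈ C, ∫ z, G (x, z) ∂(P x) ≤ h) ∧
      δ ∈ Set.Ioo (0 : ℝ) 1 ∧
      ∀ x : ℝ, ∀ n : ℕ,
        ∫ ω, ∏ i ∈ Finset.range n, G (ω i, ω (i + 1)) ∂(ξ x) ≤ V x * (β ^ δ) ^ n := by
  obtain ⟨hφ0, hφ1⟩ := hφ
  have hφ2 : φ ^ 2 < 1 := by nlinarith
  have : IsMarkovKernel P := ⟨fun x => by rw [hP x]; infer_instance⟩
  have hPV (x : ℝ) : ∫ z, V z ∂(P x) = 1 + (1 - φ ^ 2) * (1 + (φ * x) ^ 2) := by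
    simp_rw [hP, hV, integral_one_add_mul_sq_gaussianReal]
  have hout : ∀ x ∉ C, ∫ z, V z ∂(P x) ≤ β * V x := fun x hx => by
    rw [hPV, hV, hβ]
    exact ar1_drift_of_three_lt hφ2 (by simpa [hC] using hx)
  have hin : ∀ x ∈ C, ∫ z, V z ∂(P x) ≤ b * V x := fun x _ => by
    rw [hPV, hV, hb]
    exact ar1_drift_le φ x hφ2.le
  have hGC : ∀ x ∈ C, ∫ z, G (x, z) ∂(P x) ≤ h := fun x hx => by
    simp_rw [hP, hG, hh]
    exact ar1_integral_coupling_le (by simpa [hC] using hx)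
  obtain ⟨hh0, hh1⟩ : h ∈ Set.Ioo 0 1 := hh ▸ one_sub_inv_sqrt_two_mul_exp_neg_mem_Ioo
    (div_nonneg (by positivity) (by linarith))
  have hβ0 : 0 < β := by rw [hβ]; positivity
  have hβb : β < b := by rw [hβ, hb]; linarith
  have hδ : δ ∈ Set.Ioo 0 1 := hδdef ▸ log_div_log_add_log_sub_log_mem_Ioo hh0 hh1 hβ0 hβb
  have hrate : h ^ (1 - δ) * b ^ δ = β ^ δ := rpow_one_sub_mul_rpow_eq_rpow hh0 hβ0 (hβ0.trans hβb)
    (by rw [hδdef, div_mul_cancel₀ _ (log_add_log_sub_log_neg hh0 hh1 hβ0 hβb).ne])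
  obtain rfl : V = fun x => 1 + (1 - φ ^ 2) * x ^ 2 := funext hV
  obtain rfl : G = fun q => max 0 (1 - Real.exp (-(2 * φ * q.1 * q.2))) := funext hG
  have hGm : Measurable fun q : ℝ × ℝ => max 0 (1 - Real.exp (-(2 * φ * q.1 * q.2))) := by
    fun_prop
  refine ⟨hout, hin, hGC, hδ, fun x n => (hξ x).integral_prod_le_of_drift
    hGm (fun q => le_max_left _ _)
    (fun q => max_le zero_le_one (sub_le_self _ (Real.exp_pos _).le))
    (by fun_prop) (fun z => le_add_of_nonneg_right (mul_nonneg (by linarith) (sq_nonneg z)))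
    (fun y => hP y ▸ integrable_one_add_mul_sq_gaussianReal _ _) hβ0.le (hβ0.trans hβb).le
    hδ.1.le hδ.2.le hout hin hGC hrate n⟩
end
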